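/- arXiv:2208.09149 — 12 statements merged into one kernel-verified Lean document; each statement's English description precedes it below -/
import Mathlib

section
/- Let T be a bounded operator on a Hilbert space H that is generalized Drazin invertible with closed range, and let T⁻ be a fixed inner inverse of T. Then X = T^d T T⁻ satisfies: TX is idempotent, the range of TX equals the range of T T^d T, the null space of TX equals the null space of T^d T⁻, and the range of X is contained in the range of T T^d. Moreover, X is the unique operator satisfying these conditions. -/
/-!
Everything except uniqueness is a rearrangement of products using `Td T Td = Td`, `T Td = Td T`
and `T T⁻ T = T`: for `X = Td T T⁻`, `T X = (T Td T) T⁻` and `T Td T = (T X) T` give the range,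
`T X = T² (Td T⁻)` and `Td T⁻ = Td² (T X)` give the kernel. For uniqueness, `T Y` and `T X` are
idempotents with the same range and kernel, hence equal, and `T Td` is an idempotent fixing the
range of `Y`, so `Y = T Td Y = Td (T Y) = Td (T X) = X`.
-/

open Filter Topology

variable {H : Type*} [NormedAddCommGroup H] [InnerProductSpace ℂ H] [CompleteSpace H]

section Monoid

variable {M : Type*} [Monoid M] {a d i : M}

theorem isIdempotentElem_mul_of_mul_mul_eq (hd : d * a * d = d) : IsIdempotentElem (a * d) :=
  calc a * d * (a * d) = a * (d * a * d) := by simp only [mul_assoc]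
    _ = a * d := by rw [hd]

theorem isIdempotentElem_mul_mul_mul_mul (hd : d * a * d = d) (hi : a * i * a = a) :
    IsIdempotentElem (a * (d * a * i)) :=
  calc a * (d * a * i) * (a * (d * a * i)) = a * (d * (a * i * a) * d) * a * i := by
        simp only [mul_assoc]
    _ = a * (d * a * i) := by rw [hi, hd]; simp only [mul_assoc]

theorem mul_mul_mul_mul_mul_eq (hi : a * i * a = a) : a * (d * a * i) * a = a * d * a :=
  calc a * (d * a * i) * a = a * d * (a * i * a) := by simp only [mul_assoc]
    _ = a * d * a := by rw [hi]

theorem mul_mul_mul_mul_eq (hc : Commute a d) : a * (d * a * i) = a * a * (d * i) :=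
  calc a * (d * a * i) = a * (d * a) * i := by simp only [mul_assoc]
    _ = a * a * (d * i) := by rw [← hc.eq]; simp only [mul_assoc]

theorem mul_eq_mul_mul_mul_mul_mul (hd : d * a * d = d) (hc : Commute a d) :
    d * i = d * d * (a * (d * a * i)) :=
  calc d * i = d * (a * d) * i := by rw [← mul_assoc, hd]
    _ = d * (d * a * d) * a * i := by rw [hd, hc.eq]; simp only [mul_assoc]
    _ = d * d * (a * (d * a * i)) := by simp only [mul_assoc]

theorem mul_mul_mul_mul_mul_eq_self (hd : d * a * d = d) (hc : Commute a d) :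
    a * d * (d * a * i) = d * a * i :=
  calc a * d * (d * a * i) = d * a * d * a * i := by rw [hc.eq]; simp only [mul_assoc]
    _ = d * a * i := by rw [hd]

theorem eq_mul_mul_of_mul_eq {y : M} (hd : d * a * d = d) (hc : Commute a d)
    (hy : a * d * y = y) (h : a * y = a * (d * a * i)) : y = d * a * i :=
  calc y = a * d * y := hy.symm
    _ = d * (a * y) := by rw [hc.eq, mul_assoc]
    _ = d * a * d * a * i := by rw [h]; simp only [mul_assoc]
    _ = d * a * i := by rw [hd]

end Monoid

namespace ContinuousLinearMap

variable {R E : Type*} [Ring R] [AddCommGroup E] [Module R E] [TopologicalSpace E]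
  {f g : E →L[R] E}

theorem range_subset_of_dvd (h : f ∣ g) : Set.range g ⊆ Set.range f := by
  obtain ⟨u, rfl⟩ := h
  exact Set.range_comp_subset_range u f

theorem range_eq_of_dvd_of_dvd (hfg : f ∣ g) (hgf : g ∣ f) : Set.range f = Set.range g :=
  (range_subset_of_dvd hgf).antisymm (range_subset_of_dvd hfg)

theorem ker_le_of_eq_mul {u : E →L[R] E} (h : g = u * f) : f.ker ≤ g.ker := by
  subst h
  exact LinearMap.ker_le_ker_comp (f : E →ₗ[R] E) (u : E →ₗ[R] E)

theorem ker_eq_of_eq_mul_of_eq_mul {u v : E →L[R] E} (hf : f = u * g) (hg : g = v * f) :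
    f.ker = g.ker :=
  (ker_le_of_eq_mul hg).antisymm (ker_le_of_eq_mul hf)

theorem mul_eq_self_of_range_subset (hf : IsIdempotentElem f) (h : Set.range g ⊆ Set.range f) :
    f * g = g := by
  ext x
  obtain ⟨z, hz⟩ := h ⟨x, rfl⟩
  rw [mul_apply_eq_comp, ← hz]
  exact DFunLike.congr_fun hf.eq z

end ContinuousLinearMap

theorem stmt0_general (T Td Ti : H →L[ℂ] H)
    (hd1 : Td * T * Td = Td) (hd2 : T * Td = Td * T)
    (hinner : T * Ti * T = T) :
    (let X := Td * T * Ti;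
      (T * X) * (T * X) = T * X ∧
      Set.range ⇑(T * X) = Set.range ⇑(T * Td * T) ∧
      LinearMap.ker ((T * X : H →L[ℂ] H) : H →ₗ[ℂ] H) = LinearMap.ker ((Td * Ti : H →L[ℂ] H) : H →ₗ[ℂ] H) ∧
      Set.range ⇑X ⊆ Set.range ⇑(T * Td)) ∧
    ∀ Y : H →L[ℂ] H,
      ((T * Y) * (T * Y) = T * Y ∧
       Set.range ⇑(T * Y) = Set.range ⇑(T * Td * T) ∧
       LinearMap.ker ((T * Y : H →L[ℂ] H) : H →ₗ[ℂ] H) = LinearMap.ker ((Td * Ti : H →L[ℂ] H) : H →ₗ[ℂ] H) ∧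
       Set.range ⇑Y ⊆ Set.range ⇑(T * Td)) → Y = Td * T * Ti := by
  have hidem : IsIdempotentElem (T * (Td * T * Ti)) :=
    isIdempotentElem_mul_mul_mul_mul hd1 hinner
  have hrange : Set.range ⇑(T * (Td * T * Ti)) = Set.range ⇑(T * Td * T) :=
    ContinuousLinearMap.range_eq_of_dvd_of_dvd ⟨T, (mul_mul_mul_mul_mul_eq hinner).symm⟩
      ⟨Ti, by simp only [mul_assoc]⟩
  have hker : (T * (Td * T * Ti)).ker = (Td * Ti).ker :=
    ContinuousLinearMap.ker_eq_of_eq_mul_of_eq_mul (mul_mul_mul_mul_eq hd2)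
      (mul_eq_mul_mul_mul_mul_mul hd1 hd2)
  have hXrange : Set.range ⇑(Td * T * Ti) ⊆ Set.range ⇑(T * Td) :=
    ContinuousLinearMap.range_subset_of_dvd ⟨_, (mul_mul_mul_mul_mul_eq_self hd1 hd2).symm⟩
  refine ⟨⟨hidem.eq, hrange, hker, hXrange⟩, ?_⟩
  rintro Y ⟨hY1, hY2, hY3, hY4⟩
  have hTY : T * Y = T * (Td * T * Ti) :=
    ContinuousLinearMap.IsIdempotentElem.ext hY1 hidem
      ⟨SetLike.coe_injective (hY2.trans hrange.symm), hY3.trans hker.symm⟩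
  have hYfix : T * Td * Y = Y :=
    ContinuousLinearMap.mul_eq_self_of_range_subset (isIdempotentElem_mul_of_mul_mul_eq hd1) hY4
  exact eq_mul_mul_of_mul_eq hd1 hd2 hYfix hTY

theorem stmt0 (T Td Ti : H →L[ℂ] H)
    (hclosed : IsClosed (Set.range T))
    (hd1 : Td * T * Td = Td) (hd2 : T * Td = Td * T)
    (hd3 : spectralRadius ℂ (T - T^2 * Td) = 0)
    (hinner : T * Ti * T = T) :
    (let X := Td * T * Ti;
      (T * X) * (T * X) = T * X ∧
      Set.range ⇑(T * X) = Set.range ⇑(T * Td * T) ∧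
      LinearMap.ker ((T * X : H →L[ℂ] H) : H →ₗ[ℂ] H) = LinearMap.ker ((Td * Ti : H →L[ℂ] H) : H →ₗ[ℂ] H) ∧
      Set.range ⇑X ⊆ Set.range ⇑(T * Td)) ∧
    ∀ Y : H →L[ℂ] H,
      ((T * Y) * (T * Y) = T * Y ∧
       Set.range ⇑(T * Y) = Set.range ⇑(T * Td * T) ∧
       LinearMap.ker ((T * Y : H →L[ℂ] H) : H →ₗ[ℂ] H) = LinearMap.ker ((Td * Ti : H →L[ℂ] H) : H →ₗ[ℂ] H) ∧
       Set.range ⇑Y ⊆ Set.range ⇑(T * Td)) → Y = Td * T * Ti :=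
  stmt0_general T Td Ti hd1 hd2 hinner
end

section
/- Let T be a bounded operator on a Hilbert space H that is generalized Drazin invertible with closed range, and let T⁻ be an inner inverse of T. Then X = T^d T T⁻ is the unique solution of the system of operator equations: X T X = X, T^d X = T^d T⁻, and X T = T^d T. -/
open Filter Topology

variable {H : Type*} [NormedAddCommGroup H] [InnerProductSpace ℂ H] [CompleteSpace H]

section DrazinInnerSystem

variable {M : Type*} [Semigroup M] {a d t x : M}

/-- `d` stands for the generalized Drazin inverse `T^d` of `a = T`, and `t` for the inner
inverse `T⁻`. -/
def SolvesDrazinInnerSystem (a d t x : M) : Prop :=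
  x * a * x = x ∧ d * x = d * t ∧ x * a = d * a

theorem solvesDrazinInnerSystem_drazin_mul_mul_inner (hd : d * a * d = d) (hc : Commute a d)
    (ht : a * t * a = a) : SolvesDrazinInnerSystem a d t (d * a * t) := by
  have hxa : d * a * t * a = d * a := by
    rw [mul_assoc (d * a), mul_assoc d, ← mul_assoc a, ht]
  refine ⟨?_, ?_, hxa⟩
  · calc d * a * t * a * (d * a * t) = d * a * d * a * t := by
          rw [hxa]; simp only [mul_assoc]
      _ = d * a * t := by rw [hd]
  · calc d * (d * a * t) = d * (a * d) * t := by rw [hc.eq]; simp only [mul_assoc]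
      _ = d * t := by rw [← mul_assoc, hd]

theorem SolvesDrazinInnerSystem.eq_drazin_mul_mul_inner (hc : Commute a d)
    (hx : SolvesDrazinInnerSystem a d t x) : x = d * a * t := by
  obtain ⟨hxax, hdx, hxa⟩ := hx
  calc x = d * a * x := by rw [← hxa, hxax]
    _ = a * (d * x) := by rw [← hc.eq, mul_assoc]
    _ = d * a * t := by rw [hdx, ← mul_assoc, hc.eq, mul_assoc]

end DrazinInnerSystem

theorem stmt1_general (T Td Ti : H →L[ℂ] H)
    (hd1 : Td * T * Td = Td) (hd2 : T * Td = Td * T)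
    (hinner : T * Ti * T = T) :
    (let X := Td * T * Ti;
      X * T * X = X ∧ Td * X = Td * Ti ∧ X * T = Td * T) ∧
    ∀ Y : H →L[ℂ] H,
      (Y * T * Y = Y ∧ Td * Y = Td * Ti ∧ Y * T = Td * T) → Y = Td * T * Ti :=
  ⟨solvesDrazinInnerSystem_drazin_mul_mul_inner hd1 hd2 hinner,
    fun _ hY => SolvesDrazinInnerSystem.eq_drazin_mul_mul_inner hd2 hY⟩

theorem stmt1 (T Td Ti : H →L[ℂ] H)
    (hclosed : IsClosed (Set.range T))
    (hd1 : Td * T * Td = Td) (hd2 : T * Td = Td * T)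
    (hd3 : spectralRadius ℂ (T - T^2 * Td) = 0)
    (hinner : T * Ti * T = T) :
    (let X := Td * T * Ti;
      X * T * X = X ∧ Td * X = Td * Ti ∧ X * T = Td * T) ∧
    ∀ Y : H →L[ℂ] H,
      (Y * T * Y = Y ∧ Td * Y = Td * Ti ∧ Y * T = Td * T) → Y = Td * T * Ti :=
  stmt1_general T Td Ti hd1 hd2 hinner
end

section
/- Let T be a bounded operator on a Hilbert space H that is generalized Drazin invertible with closed range, with GD1 inverse T^{GD-} = T^d T T⁻ for a fixed inner inverse T⁻. Then T T^{GD-} = T^{GD-} T if and only if T^{GD-} = T^d. -/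
open Filter Topology

variable {H : Type*} [NormedAddCommGroup H] [InnerProductSpace ℂ H] [CompleteSpace H]

section Monoid

variable {M : Type*} [Monoid M] {a d x : M}

theorem commute_mul_mul_inner_iff (hd : d * a * d = d) (hcomm : Commute a d)
    (hx : a * x * a = a) :
    Commute a (d * a * x) ↔ d * a * x = d := by
  refine ⟨fun h => ?_, fun h => h.symm ▸ hcomm⟩
  have hax : a * (d * a * x) = d * a := by
    rw [h.eq, mul_assoc d, mul_assoc d, hx]
  calc d * a * x = d * (a * (d * a * x)) := by simp only [← mul_assoc, hd]
    _ = d := by rw [hax, ← hcomm.eq, ← mul_assoc, hd]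

end Monoid

theorem stmt2_general (T Td Ti : H →L[ℂ] H)
    (hd1 : Td * T * Td = Td) (hd2 : T * Td = Td * T)
    (hinner : T * Ti * T = T) :
    T * (Td * T * Ti) = (Td * T * Ti) * T ↔ Td * T * Ti = Td :=
  commute_mul_mul_inner_iff hd1 hd2 hinner

theorem stmt2 (T Td Ti : H →L[ℂ] H)
    (hclosed : IsClosed (Set.range T))
    (hd1 : Td * T * Td = Td) (hd2 : T * Td = Td * T)
    (hd3 : spectralRadius ℂ (T - T^2 * Td) = 0)
    (hinner : T * Ti * T = T) :
    T * (Td * T * Ti) = (Td * T * Ti) * T ↔ Td * T * Ti = Td :=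
  stmt2_general T Td Ti hd1 hd2 hinner
end

section
/- Let T be a bounded operator on a Hilbert space H that is generalized Drazin invertible with closed range, with GD1 inverse T^{GD-} = T^d T T⁻. Then T^{GD-} is idempotent if and only if T^{GD-} = T^d T⁻, and this holds if and only if T^{GD-} = T T^{GD-}. -/
/-!
The algebraic identity `(T^d T T⁻)² = T^d T⁻` holds in any semigroup as soon as `T^d T T^d = T^d`,
`T T^d = T^d T` and `T T⁻ T = T`, so idempotency of `T^{GD-}` is the same as `T^{GD-} = T^d T⁻`.
Commutation gives `T (T^d T⁻) = T^d T T⁻`, and conversely `T^d = T^d T^d T` lets one cancel `T`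
on the left of `T^{GD-} = T T^{GD-}`.
-/

namespace GDOneInverse

variable {M : Type*} [Semigroup M] {a d x : M}

theorem drazin_mul_drazin_mul (hd : d * a * d = d) (hcomm : a * d = d * a) : d * d * a = d := by
  rw [mul_assoc, ← hcomm, ← mul_assoc, hd]

theorem mul_self_eq (hd : d * a * d = d) (hcomm : a * d = d * a) (hx : a * x * a = a) :
    (d * a * x) * (d * a * x) = d * x :=
  calc (d * a * x) * (d * a * x) = d * (a * x * (d * a)) * x := by simp only [mul_assoc]
    _ = d * (a * x * a) * d * x := by rw [← hcomm]; simp only [mul_assoc]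
    _ = d * x := by rw [hx, hd]

theorem eq_drazin_mul_iff_eq_mul (hd : d * a * d = d) (hcomm : a * d = d * a) :
    d * a * x = d * x ↔ d * a * x = a * (d * a * x) := by
  constructor
  · intro h
    rw [h, ← mul_assoc, hcomm, h]
  · intro h
    calc d * a * x = d * a * d * a * x := by rw [hd]
      _ = d * (a * (d * a * x)) := by simp only [mul_assoc]
      _ = d * d * a * x := by rw [← h]; simp only [mul_assoc]
      _ = d * x := by rw [drazin_mul_drazin_mul hd hcomm]

end GDOneInverse

open Filter Topology

variable {H : Type*} [NormedAddCommGroup H] [InnerProductSpace ℂ H] [CompleteSpace H]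

theorem stmt4_general (T Td Ti : H →L[ℂ] H)
    (hd1 : Td * T * Td = Td) (hd2 : T * Td = Td * T)
    (hinner : T * Ti * T = T) :
    ((Td * T * Ti) * (Td * T * Ti) = Td * T * Ti ↔ Td * T * Ti = Td * Ti) ∧
    ((Td * T * Ti) * (Td * T * Ti) = Td * T * Ti ↔ Td * T * Ti = T * (Td * T * Ti)) := by
  rw [GDOneInverse.mul_self_eq hd1 hd2 hinner]
  exact ⟨eq_comm, eq_comm.trans (GDOneInverse.eq_drazin_mul_iff_eq_mul hd1 hd2)⟩

theorem stmt4 (T Td Ti : H →L[ℂ] H)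
    (hclosed : IsClosed (Set.range T))
    (hd1 : Td * T * Td = Td) (hd2 : T * Td = Td * T)
    (hd3 : spectralRadius ℂ (T - T^2 * Td) = 0)
    (hinner : T * Ti * T = T) :
    ((Td * T * Ti) * (Td * T * Ti) = Td * T * Ti ↔ Td * T * Ti = Td * Ti) ∧
    ((Td * T * Ti) * (Td * T * Ti) = Td * T * Ti ↔ Td * T * Ti = T * (Td * T * Ti)) :=
  stmt4_general T Td Ti hd1 hd2 hinner
end

section
/- Let T be a bounded operator on a Hilbert space H that is generalized Drazin invertible with closed range, with GD1 inverse T^{GD-} = T^d T T⁻. Then T T^{GD-} = T T⁻ if and only if T T^d T = T. -/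
open Filter Topology

variable {H : Type*} [NormedAddCommGroup H] [InnerProductSpace ℂ H] [CompleteSpace H]

theorem mul_eq_right_iff_of_mul_mul_eq {S : Type*} [Semigroup S] {t ti : S}
    (h : t * ti * t = t) (a : S) : a * (t * ti) = t * ti ↔ a * t = t := by
  constructor
  · intro ha
    calc a * t = a * (t * ti) * t := by rw [mul_assoc a, h]
      _ = t := by rw [ha, h]
  · intro ha
    rw [← mul_assoc, ha]

theorem stmt5_general (T Td Ti : H →L[ℂ] H)
    (hinner : T * Ti * T = T) :
    T * (Td * T * Ti) = T * Ti ↔ T * Td * T = T := by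
  simpa only [mul_assoc] using mul_eq_right_iff_of_mul_mul_eq hinner (T * Td)

theorem stmt5 (T Td Ti : H →L[ℂ] H)
    (hclosed : IsClosed (Set.range T))
    (hd1 : Td * T * Td = Td) (hd2 : T * Td = Td * T)
    (hd3 : spectralRadius ℂ (T - T^2 * Td) = 0)
    (hinner : T * Ti * T = T) :
    T * (Td * T * Ti) = T * Ti ↔ T * Td * T = T :=
  stmt5_general T Td Ti hinner
end

section
/- Let T be a bounded operator on a Hilbert space H that is generalized Drazin invertible with closed range, with GD1 inverse T^{GD-} = T^d T T⁻. Then T^{GD-} is idempotent if and only if T^{GD-} = T^n (T^{GD-})^m for all n ∈ ℕ ∪ {0} and all m ∈ ℕ with m ≥ 1. -/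
/-!
Write `P = d t i`. The inner-inverse identity gives `P t = d t`, and together with `d t d = d`
and `t d = d t` it gives `P (d t) = d`. If `P` is idempotent, then `d t = P t = P (P t) = P (d t) = d`,
so `t P = (t d) t i = (d t) t i = P`: left multiplication by any power of `t` fixes `P`, and every
positive power of `P` is `P`. Conversely, `n = 0`, `m = 2` is idempotence.
-/

open Filter Topology

variable {H : Type*} [NormedAddCommGroup H] [InnerProductSpace ℂ H] [CompleteSpace H]

theorem pow_mul_eq_self_of_mul_eq_self {M : Type*} [Monoid M] {a b : M} (h : a * b = b) :
    ∀ n : ℕ, a ^ n * b = b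
  | 0 => by rw [pow_zero, one_mul]
  | n + 1 => by rw [pow_succ, mul_assoc, h, pow_mul_eq_self_of_mul_eq_self h n]

section GDOneInverse

variable {M : Type*} [Monoid M] {t d i : M}

theorem mul_mul_inner_mul_self (hi : t * i * t = t) : d * t * i * t = d * t := by
  simpa only [mul_assoc] using congrArg (d * ·) hi

theorem mul_mul_inner_mul_mul_self (hd : d * t * d = d) (hcomm : t * d = d * t)
    (hi : t * i * t = t) : d * t * i * (d * t) = d := by
  calc d * t * i * (d * t) = d * t * i * t * d := by rw [← hcomm]; simp only [mul_assoc]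
    _ = d * t * d := by rw [mul_mul_inner_mul_self hi]
    _ = d := hd

theorem mul_eq_left_of_isIdempotentElem (hd : d * t * d = d) (hcomm : t * d = d * t)
    (hi : t * i * t = t) (hP : IsIdempotentElem (d * t * i)) : d * t = d := by
  calc d * t = d * t * i * t := (mul_mul_inner_mul_self hi).symm
    _ = d * t * i * (d * t * i) * t := by rw [hP.eq]
    _ = d * t * i * (d * t * i * t) := mul_assoc _ _ _
    _ = d := by rw [mul_mul_inner_mul_self hi, mul_mul_inner_mul_mul_self hd hcomm hi]

theorem mul_eq_right_of_isIdempotentElem (hd : d * t * d = d) (hcomm : t * d = d * t)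
    (hi : t * i * t = t) (hP : IsIdempotentElem (d * t * i)) : t * (d * t * i) = d * t * i := by
  have htd : t * d = d := hcomm.trans (mul_eq_left_of_isIdempotentElem hd hcomm hi hP)
  calc t * (d * t * i) = t * d * t * i := by simp only [mul_assoc]
    _ = d * t * i := by rw [htd]

theorem isIdempotentElem_mul_mul_inner_iff (hd : d * t * d = d) (hcomm : t * d = d * t)
    (hi : t * i * t = t) :
    IsIdempotentElem (d * t * i) ↔
      ∀ n m : ℕ, 1 ≤ m → d * t * i = t ^ n * (d * t * i) ^ m := by
  refine ⟨fun hP n m hm => ?_, fun h => ?_⟩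
  · rw [hP.pow_eq (by omega),
      pow_mul_eq_self_of_mul_eq_self (mul_eq_right_of_isIdempotentElem hd hcomm hi hP)]
  · have h02 := h 0 2 one_le_two
    rwa [pow_zero, one_mul, sq, eq_comm] at h02

end GDOneInverse

theorem stmt8_general (T Td Ti : H →L[ℂ] H)
    (hd1 : Td * T * Td = Td) (hd2 : T * Td = Td * T)
    (hinner : T * Ti * T = T) :
    (Td * T * Ti) * (Td * T * Ti) = Td * T * Ti ↔
      ∀ (n : ℕ) (m : ℕ), 1 ≤ m → Td * T * Ti = T ^ n * (Td * T * Ti) ^ m :=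
  isIdempotentElem_mul_mul_inner_iff hd1 hd2 hinner

theorem stmt8 (T Td Ti : H →L[ℂ] H)
    (hclosed : IsClosed (Set.range T))
    (hd1 : Td * T * Td = Td) (hd2 : T * Td = Td * T)
    (hd3 : spectralRadius ℂ (T - T^2 * Td) = 0)
    (hinner : T * Ti * T = T) :
    (Td * T * Ti) * (Td * T * Ti) = Td * T * Ti ↔
      ∀ (n : ℕ) (m : ℕ), 1 ≤ m → Td * T * Ti = T ^ n * (Td * T * Ti) ^ m :=
  stmt8_general T Td Ti hd1 hd2 hinner
end

section
/- Let T be a bounded operator on a Hilbert space H that is generalized Drazin invertible with closed range, and let X ∈ B(H) satisfy X T X = X and X T = T^d T. Then T²(X − T⁻) is quasinilpotent for any inner inverse T⁻ of T. In particular, (T^d T − I) T² T⁻ is quasinilpotent. -/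
/-!
Writing `T²(X - T⁻) = T · T(X - T⁻)` and swapping the factors, which preserves the nonzero
spectrum, `T²(X - T⁻)` has the spectral radius of `T(X - T⁻)T = T T^d T - T = -(T - T² T^d)`,
which is quasinilpotent by the defining property of the generalized Drazin inverse. The same
computation applies to `T^d T T⁻` in place of `X`, since `T^d T T⁻ T = T^d T`, and
`(T^d T - 1) T² T⁻ = T²(T^d T T⁻ - T⁻)`.
-/

open Filter Topology

section SpectralRadius

variable {𝕜 A : Type*} [NormedField 𝕜] [Ring A] [Algebra 𝕜 A]

theorem spectralRadius_eq_iSup_diff_zero (a : A) :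
    spectralRadius 𝕜 a = ⨆ k ∈ spectrum 𝕜 a \ {0}, (‖k‖₊ : ENNReal) := by
  refine le_antisymm (iSup₂_le fun k hk => ?_) (iSup₂_mono' fun k hk => ⟨k, hk.1, le_rfl⟩)
  rcases eq_or_ne k 0 with rfl | hk0
  · simp
  · exact le_iSup₂_of_le (f := fun k (_ : k ∈ spectrum 𝕜 a \ {0}) => (‖k‖₊ : ENNReal))
      k ⟨hk, hk0⟩ le_rfl

theorem spectralRadius_mul_comm (a b : A) :
    spectralRadius 𝕜 (a * b) = spectralRadius 𝕜 (b * a) := by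
  rw [spectralRadius_eq_iSup_diff_zero, spectralRadius_eq_iSup_diff_zero,
    spectrum.nonzero_mul_comm]

theorem spectralRadius_neg (a : A) : spectralRadius 𝕜 (-a) = spectralRadius 𝕜 a := by
  simp only [spectralRadius, ← spectrum.neg_eq, Set.mem_neg]
  exact (Equiv.neg 𝕜).iSup_congr fun k => by simp

end SpectralRadius

section InnerInverse

variable {R : Type*} [Ring R] {T Td Ti X : R}

theorem mul_sub_inner_inverse_mul (hd : Commute T Td) (hTi : T * Ti * T = T)
    (hX : X * T = Td * T) : T * (X - Ti) * T = T ^ 2 * Td - T := by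
  rw [mul_sub, sub_mul, hTi, mul_assoc, hX, ← hd.eq, ← mul_assoc, sq]

theorem mul_mul_inner_inverse_mul (hTi : T * Ti * T = T) : Td * T * Ti * T = Td * T := by
  rw [mul_assoc, mul_assoc, ← mul_assoc T, hTi]

theorem sub_one_mul_sq_mul_eq (hd : Commute T Td) :
    (Td * T - 1) * (T ^ 2 * Ti) = T ^ 2 * (Td * T * Ti - Ti) := by
  have h : Commute (Td * T) (T ^ 2) := (hd.symm.mul_left (Commute.refl T)).pow_right 2
  rw [sub_mul, one_mul, ← mul_assoc, h.eq, mul_sub, mul_assoc, mul_assoc]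

variable {𝕜 : Type*} [NormedField 𝕜] [Algebra 𝕜 R]

theorem spectralRadius_sq_mul_sub_inner_inverse (hd : Commute T Td) (hTi : T * Ti * T = T)
    (hX : X * T = Td * T) :
    spectralRadius 𝕜 (T ^ 2 * (X - Ti)) = spectralRadius 𝕜 (T - T ^ 2 * Td) := by
  rw [sq, mul_assoc, spectralRadius_mul_comm, ← sq T,
    mul_sub_inner_inverse_mul hd hTi hX, ← neg_sub, spectralRadius_neg]

end InnerInverse

variable {H : Type*} [NormedAddCommGroup H] [InnerProductSpace ℂ H] [CompleteSpace H]

theorem stmt10_general (T Td Ti X : H →L[ℂ] H)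
    (hd2 : T * Td = Td * T)
    (hd3 : spectralRadius ℂ (T - T^2 * Td) = 0)
    (hinner : T * Ti * T = T)
    (hX2 : X * T = Td * T) :
    spectralRadius ℂ (T ^ 2 * (X - Ti)) = 0 ∧
    spectralRadius ℂ ((Td * T - 1) * (T ^ 2 * Ti)) = 0 := by
  constructor
  · rw [spectralRadius_sq_mul_sub_inner_inverse hd2 hinner hX2, hd3]
  · rw [sub_one_mul_sq_mul_eq hd2,
      spectralRadius_sq_mul_sub_inner_inverse hd2 hinner (mul_mul_inner_inverse_mul hinner), hd3]

theorem stmt10 (T Td Ti X : H →L[ℂ] H)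
    (hclosed : IsClosed (Set.range T))
    (hd1 : Td * T * Td = Td) (hd2 : T * Td = Td * T)
    (hd3 : spectralRadius ℂ (T - T^2 * Td) = 0)
    (hinner : T * Ti * T = T)
    (hX1 : X * T * X = X) (hX2 : X * T = Td * T) :
    spectralRadius ℂ (T ^ 2 * (X - Ti)) = 0 ∧
    spectralRadius ℂ ((Td * T - 1) * (T ^ 2 * Ti)) = 0 :=
  stmt10_general T Td Ti X hd2 hd3 hinner hX2
end

section
/- Let T be a bounded operator on a Hilbert space H that is generalized Drazin invertible with closed range, and T⁻ an inner inverse of T. Then lim_{n→∞} (T⁻ T^{n+1} T^d − T^{n+1} T^d T⁻) = 0 (in operator norm) if and only if both lim_{n→∞} (T⁻ T^{n+2} T^d − T^{n+1} T^d) = 0 and lim_{n→∞} (T^{n+2} T^d T⁻ − T^{n+1} T^d) = 0. -/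
/-!
Write `A n = T⁻ T^(n+1) T^d - T^(n+1) T^d T⁻`. Since `T` commutes with `T^d` and `T T⁻ T = T`,
the two sequences on the right are `A n * T` and `-(T * A n)`, so they tend to `0` when `A` does;
conversely their difference is `A (n+1)`.
-/

open Filter Topology

section Ring

variable {R : Type*} [Ring R]

def drazinCommutator (s t d : R) (n : ℕ) : R :=
  s * t ^ (n + 1) * d - t ^ (n + 1) * d * s

variable {s t d : R}

theorem drazinCommutator_succ (n : ℕ) :
    drazinCommutator s t d (n + 1) =
      (s * t ^ (n + 2) * d - t ^ (n + 1) * d) - (t ^ (n + 2) * d * s - t ^ (n + 1) * d) :=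
  (sub_sub_sub_cancel_right _ _ _).symm

theorem drazinCommutator_mul_self (htd : Commute t d) (hs : t * s * t = t) (n : ℕ) :
    drazinCommutator s t d n * t = s * t ^ (n + 2) * d - t ^ (n + 1) * d := by
  have hpow : t ^ (n + 1) * d = t ^ n * d * t := by
    rw [pow_succ, mul_assoc, htd.eq, ← mul_assoc]
  have hleft : s * t ^ (n + 1) * d * t = s * t ^ (n + 2) * d := by
    rw [mul_assoc, ← htd.eq, ← mul_assoc, mul_assoc s, ← pow_succ]
  have hright : t ^ (n + 1) * d * s * t = t ^ (n + 1) * d := by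
    rw [hpow, mul_assoc, mul_assoc, ← mul_assoc t, hs]
  rw [drazinCommutator, sub_mul, hleft, hright]

theorem self_mul_drazinCommutator (hs : t * s * t = t) (n : ℕ) :
    t * drazinCommutator s t d n = -(t ^ (n + 2) * d * s - t ^ (n + 1) * d) := by
  have hleft : t * (s * t ^ (n + 1) * d) = t ^ (n + 1) * d := by
    rw [pow_succ', ← mul_assoc, ← mul_assoc, ← mul_assoc, hs, mul_assoc]
  have hright : t * (t ^ (n + 1) * d * s) = t ^ (n + 2) * d * s := by
    rw [← mul_assoc, ← mul_assoc, ← pow_succ']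
  rw [drazinCommutator, mul_sub, hleft, hright, neg_sub]

theorem tendsto_drazinCommutator_iff [TopologicalSpace R] [IsTopologicalRing R]
    (htd : Commute t d) (hs : t * s * t = t) :
    Tendsto (drazinCommutator s t d) atTop (𝓝 0) ↔
      Tendsto (fun n : ℕ => s * t ^ (n + 2) * d - t ^ (n + 1) * d) atTop (𝓝 0) ∧
        Tendsto (fun n : ℕ => t ^ (n + 2) * d * s - t ^ (n + 1) * d) atTop (𝓝 0) := by
  constructor
  · intro hA
    constructor
    · simpa only [drazinCommutator_mul_self htd hs, zero_mul] using hA.mul_const t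
    · simpa only [self_mul_drazinCommutator hs, neg_neg, mul_zero, neg_zero] using
        (hA.const_mul t).neg
  · rintro ⟨hB, hC⟩
    rw [← tendsto_add_atTop_iff_nat 1]
    simpa only [drazinCommutator_succ, sub_zero] using hB.sub hC

end Ring

variable {H : Type*} [NormedAddCommGroup H] [InnerProductSpace ℂ H] [CompleteSpace H]

theorem stmt12_general (T Td Ti : H →L[ℂ] H)
    (hd2 : T * Td = Td * T)
    (hinner : T * Ti * T = T) :
    Tendsto (fun n : ℕ => Ti * T ^ (n + 1) * Td - T ^ (n + 1) * Td * Ti) atTop (𝓝 0) ↔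
      (Tendsto (fun n : ℕ => Ti * T ^ (n + 2) * Td - T ^ (n + 1) * Td) atTop (𝓝 0) ∧
       Tendsto (fun n : ℕ => T ^ (n + 2) * Td * Ti - T ^ (n + 1) * Td) atTop (𝓝 0)) :=
  tendsto_drazinCommutator_iff hd2 hinner

theorem stmt12 (T Td Ti : H →L[ℂ] H)
    (hclosed : IsClosed (Set.range T))
    (hd1 : Td * T * Td = Td) (hd2 : T * Td = Td * T)
    (hd3 : spectralRadius ℂ (T - T^2 * Td) = 0)
    (hinner : T * Ti * T = T) :
    Tendsto (fun n : ℕ => Ti * T ^ (n + 1) * Td - T ^ (n + 1) * Td * Ti) atTop (𝓝 0) ↔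
      (Tendsto (fun n : ℕ => Ti * T ^ (n + 2) * Td - T ^ (n + 1) * Td) atTop (𝓝 0) ∧
       Tendsto (fun n : ℕ => T ^ (n + 2) * Td * Ti - T ^ (n + 1) * Td) atTop (𝓝 0)) :=
  stmt12_general T Td Ti hd2 hinner
end

section
/- Let S, T be bounded operators on a Hilbert space H with S generalized Drazin invertible with closed range. Suppose ‖S^d‖ ≤ 1 and lim_{n→∞} ‖S^{n+2} S^d S⁻ − S^{n+1} S^d‖ = 0. Then S ≤^{GD-} T (i.e., S S^{GD-} = T S^{GD-} and S^{GD-} S = S^{GD-} T) if and only if S ≤^d T (i.e., S S^d = T S^d and S^d S = S^d T). -/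
/-!
Multiplying the n-th term of the sequence by `S^d ^ n` turns it into `S² S^d S⁻ - S S^d`
(because `S^d S` is an idempotent fixing `S^d`), and `‖S^d ^ n‖ ≤ 1`, so this fixed operator
vanishes. Multiplying `S² S^d S⁻ = S S^d` by `S^d` gives `S^{GD-} = S^d S S⁻ = S^d`,
so the two relations coincide.
-/

open Filter Topology

variable {H : Type*} [NormedAddCommGroup H] [InnerProductSpace ℂ H] [CompleteSpace H]

section Monoid

variable {M : Type*} [Monoid M] {a b : M}

theorem pow_mul_pow_add_mul_of_mul_mul_eq (hb : b * a * b = b) (hab : Commute a b) (n k : ℕ) :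
    b ^ n * a ^ (n + k) * b = a ^ k * b := by
  have hidem : ∀ n : ℕ, (b * a) ^ n * b = b := by
    intro n
    induction n with
    | zero => simp
    | succ n ih => rw [pow_succ, mul_assoc, hb, ih]
  calc b ^ n * a ^ (n + k) * b = (b * a) ^ n * b * a ^ k := by
        rw [pow_add, hab.symm.mul_pow, ← mul_assoc, mul_assoc _ (a ^ k), (hab.pow_left k).eq]
        simp only [mul_assoc]
    _ = a ^ k * b := by rw [hidem, (hab.pow_left k).eq]

theorem mul_mul_eq_of_sq_mul_mul_eq (hb : b * a * b = b) (hab : Commute a b) {c : M}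
    (h : a ^ 2 * b * c = a * b) : b * a * c = b :=
  calc b * a * c = b * (a * (b * a)) * c := by rw [← mul_assoc, ← mul_assoc, hb]
    _ = b * (a ^ 2 * b * c) := by rw [← hab.eq, sq]; simp only [mul_assoc]
    _ = b := by rw [h, ← mul_assoc, hb]

end Monoid

section NormedRing

variable {R : Type*} [NormedRing R] {a b c : R}

theorem norm_pow_mul_le_of_norm_le_one (hb : ‖b‖ ≤ 1) (x : R) (n : ℕ) : ‖b ^ n * x‖ ≤ ‖x‖ := by
  induction n with
  | zero => simp
  | succ n ih =>
    calc ‖b ^ (n + 1) * x‖ = ‖b * (b ^ n * x)‖ := by rw [pow_succ', mul_assoc]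
      _ ≤ ‖b‖ * ‖b ^ n * x‖ := norm_mul_le _ _
      _ ≤ ‖x‖ := (mul_le_of_le_one_left (norm_nonneg _) hb).trans ih

theorem sq_mul_mul_eq_of_tendsto (hb : b * a * b = b) (hab : Commute a b) (hnorm : ‖b‖ ≤ 1)
    (hlim : Tendsto (fun n : ℕ => ‖a ^ (n + 2) * b * c - a ^ (n + 1) * b‖) atTop (𝓝 0)) :
    a ^ 2 * b * c = a * b := by
  have hbound : ∀ n : ℕ, ‖a ^ 2 * b * c - a * b‖ ≤ ‖a ^ (n + 2) * b * c - a ^ (n + 1) * b‖ := by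
    intro n
    have hfixed : b ^ n * (a ^ (n + 2) * b * c - a ^ (n + 1) * b) = a ^ 2 * b * c - a * b := by
      simp only [mul_sub, ← mul_assoc, pow_mul_pow_add_mul_of_mul_mul_eq hb hab, pow_one]
    calc ‖a ^ 2 * b * c - a * b‖
        = ‖b ^ n * (a ^ (n + 2) * b * c - a ^ (n + 1) * b)‖ := by rw [hfixed]
      _ ≤ ‖a ^ (n + 2) * b * c - a ^ (n + 1) * b‖ := norm_pow_mul_le_of_norm_le_one hnorm _ n
  exact sub_eq_zero.mp (norm_le_zero_iff.mp (ge_of_tendsto' hlim hbound))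

end NormedRing

theorem stmt15_general (S T Sd Si : H →L[ℂ] H)
    (hd1 : Sd * S * Sd = Sd) (hd2 : S * Sd = Sd * S)
    (hnorm : ‖Sd‖ ≤ 1)
    (hlim : Tendsto (fun n : ℕ => ‖S ^ (n + 2) * Sd * Si - S ^ (n + 1) * Sd‖) atTop (𝓝 0)) :
    (S * (Sd * S * Si) = T * (Sd * S * Si) ∧ (Sd * S * Si) * S = (Sd * S * Si) * T) ↔
      (S * Sd = T * Sd ∧ Sd * S = Sd * T) := by
  have hGD : Sd * S * Si = Sd :=
    mul_mul_eq_of_sq_mul_mul_eq hd1 hd2 (sq_mul_mul_eq_of_tendsto hd1 hd2 hnorm hlim)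
  rw [hGD]

theorem stmt15 (S T Sd Si : H →L[ℂ] H)
    (hclosed : IsClosed (Set.range S))
    (hd1 : Sd * S * Sd = Sd) (hd2 : S * Sd = Sd * S)
    (hd3 : spectralRadius ℂ (S - S^2 * Sd) = 0)
    (hinner : S * Si * S = S)
    (hnorm : ‖Sd‖ ≤ 1)
    (hlim : Tendsto (fun n : ℕ => ‖S ^ (n + 2) * Sd * Si - S ^ (n + 1) * Sd‖) atTop (𝓝 0)) :
    (S * (Sd * S * Si) = T * (Sd * S * Si) ∧ (Sd * S * Si) * S = (Sd * S * Si) * T) ↔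
      (S * Sd = T * Sd ∧ Sd * S = Sd * T) :=
  stmt15_general S T Sd Si hd1 hd2 hnorm hlim
end

section
/- Let T be a bounded operator on a Hilbert space H that is generalized Drazin invertible with closed range, and let T⁻ be a fixed inner inverse of T. Then X = T⁻ T T^d is the unique solution of the operator equations X T X = X, X T^d = T⁻ T^d, and T X = T T^d. -/
open Filter Topology

variable {H : Type*} [NormedAddCommGroup H] [InnerProductSpace ℂ H] [CompleteSpace H]

section Semigroup

variable {M : Type*} [Semigroup M]

def SolvesInnerDrazinSystem (a d g x : M) : Prop :=
  x * a * x = x ∧ x * d = g * d ∧ a * x = a * d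

theorem solvesInnerDrazinSystem_inner_mul_self_mul_drazin {a d g : M}
    (hdad : d * a * d = d) (hcomm : a * d = d * a) (hinner : a * g * a = a) :
    SolvesInnerDrazinSystem a d g (g * a * d) := by
  have hax : a * (g * a * d) = a * d := by
    rw [← mul_assoc, ← mul_assoc, hinner]
  refine ⟨?_, ?_, hax⟩
  · calc g * a * d * a * (g * a * d)
        = g * a * d * (a * (g * a * d)) := by rw [mul_assoc]
      _ = g * a * (d * a * d) := by rw [hax, mul_assoc (g * a), mul_assoc d]
      _ = g * a * d := by rw [hdad]
  · rw [mul_assoc g a d, mul_assoc, hcomm, hdad]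

theorem SolvesInnerDrazinSystem.eq_inner_mul_self_mul_drazin {a d g x : M}
    (hcomm : a * d = d * a) (hx : SolvesInnerDrazinSystem a d g x) :
    x = g * a * d := by
  obtain ⟨hxax, hxd, hax⟩ := hx
  calc x = x * (a * x) := by rw [← mul_assoc, hxax]
    _ = x * d * a := by rw [hax, hcomm, mul_assoc]
    _ = g * a * d := by rw [hxd, mul_assoc, ← hcomm, mul_assoc]

end Semigroup

theorem stmt16_general (T Td Ti : H →L[ℂ] H)
    (hd1 : Td * T * Td = Td) (hd2 : T * Td = Td * T)
    (hinner : T * Ti * T = T) :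
    (let X := Ti * T * Td;
      X * T * X = X ∧ X * Td = Ti * Td ∧ T * X = T * Td) ∧
    ∀ Y : H →L[ℂ] H,
      (Y * T * Y = Y ∧ Y * Td = Ti * Td ∧ T * Y = T * Td) → Y = Ti * T * Td :=
  ⟨solvesInnerDrazinSystem_inner_mul_self_mul_drazin hd1 hd2 hinner,
    fun _ hY => SolvesInnerDrazinSystem.eq_inner_mul_self_mul_drazin (g := Ti) hd2 hY⟩

theorem stmt16 (T Td Ti : H →L[ℂ] H)
    (hclosed : IsClosed (Set.range T))
    (hd1 : Td * T * Td = Td) (hd2 : T * Td = Td * T)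
    (hd3 : spectralRadius ℂ (T - T^2 * Td) = 0)
    (hinner : T * Ti * T = T) :
    (let X := Ti * T * Td;
      X * T * X = X ∧ X * Td = Ti * Td ∧ T * X = T * Td) ∧
    ∀ Y : H →L[ℂ] H,
      (Y * T * Y = Y ∧ Y * Td = Ti * Td ∧ T * Y = T * Td) → Y = Ti * T * Td :=
  stmt16_general T Td Ti hd1 hd2 hinner
end

section
/- Let S, T be bounded operators on a Hilbert space H with S generalized Drazin invertible with closed range, S⁻ an inner inverse of S, and S^{-GD} = S⁻ S S^d. Then (i) S^{-GD} S = S^{-GD} T if and only if S^d S = S^d T, and (ii) S S^{-GD} = T S^{-GD} if and only if S^d = T S⁻ S^d. -/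
/-! With `G = Si S Sd` we have `G = (Si S) Sd` and, by `S Si S = S` and `Sd S Sd = Sd`,
`Sd = (Sd S) G`: each of `G`, `Sd` is a left multiple of the other, so `G X = G Y ↔ Sd X = Sd Y`,
which is (i). For (ii), `S G = S Sd` and `T G = (T Si)(S Sd)`, while `S Sd = Sd S` and
`Sd = (S Sd) Sd`; the mirrored argument gives `X (S Sd) = Y (S Sd) ↔ X Sd = Y Sd`, applied to
`X = 1`, `Y = T Si`. -/

open Filter Topology

variable {H : Type*} [NormedAddCommGroup H] [InnerProductSpace ℂ H] [CompleteSpace H]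

section Monoid

variable {M : Type*} [Monoid M]

theorem mul_eq_mul_left_iff_of_mutual_factors {g d a b : M} (hg : g = a * d) (hd : d = b * g)
    (x y : M) : g * x = g * y ↔ d * x = d * y := by
  constructor
  · intro h
    rw [hd, mul_assoc, h, ← mul_assoc]
  · intro h
    rw [hg, mul_assoc, h, ← mul_assoc]

theorem mul_eq_mul_right_iff_of_mutual_factors {g d a b : M} (hg : g = d * a) (hd : d = g * b)
    (x y : M) : x * g = y * g ↔ x * d = y * d := by
  constructor
  · intro h
    rw [hd, ← mul_assoc, h, mul_assoc]
  · intro h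
    rw [hg, ← mul_assoc, h, mul_assoc]

variable {s d i : M}

theorem drazin_eq_mul_inner_mul_drazin (hd : d * s * d = d) (hi : s * i * s = s) :
    d = d * s * (i * s * d) := by
  calc d = d * s * d := hd.symm
    _ = d * (s * i * s) * d := by rw [hi]
    _ = d * s * (i * s * d) := by simp only [mul_assoc]

theorem mul_inner_mul_drazin (hi : s * i * s = s) : s * (i * s * d) = s * d := by
  calc s * (i * s * d) = s * i * s * d := by simp only [mul_assoc]
    _ = s * d := by rw [hi]

theorem drazin_eq_mul_drazin_mul_drazin (hd : d * s * d = d) (hc : s * d = d * s) :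
    d = s * d * d := by
  rw [hc, hd]

end Monoid

theorem stmt17_general (S T Sd Si : H →L[ℂ] H)
    (hd1 : Sd * S * Sd = Sd) (hd2 : S * Sd = Sd * S)
    (hinner : S * Si * S = S) :
    ((Si * S * Sd) * S = (Si * S * Sd) * T ↔ Sd * S = Sd * T) ∧
    (S * (Si * S * Sd) = T * (Si * S * Sd) ↔ Sd = T * Si * Sd) := by
  refine ⟨mul_eq_mul_left_iff_of_mutual_factors (a := Si * S) rfl
    (drazin_eq_mul_inner_mul_drazin hd1 hinner) S T, ?_⟩
  have hT : T * (Si * S * Sd) = T * Si * (S * Sd) := by simp only [mul_assoc]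
  have h := mul_eq_mul_right_iff_of_mutual_factors hd2
    (drazin_eq_mul_drazin_mul_drazin hd1 hd2) 1 (T * Si)
  rw [one_mul, one_mul] at h
  rwa [mul_inner_mul_drazin hinner, hT]

theorem stmt17 (S T Sd Si : H →L[ℂ] H)
    (hclosed : IsClosed (Set.range S))
    (hd1 : Sd * S * Sd = Sd) (hd2 : S * Sd = Sd * S)
    (hd3 : spectralRadius ℂ (S - S^2 * Sd) = 0)
    (hinner : S * Si * S = S) :
    ((Si * S * Sd) * S = (Si * S * Sd) * T ↔ Sd * S = Sd * T) ∧
    (S * (Si * S * Sd) = T * (Si * S * Sd) ↔ Sd = T * Si * Sd) :=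
  stmt17_general S T Sd Si hd1 hd2 hinner
end

section
/- Let T, S be bounded operators between Hilbert spaces, T ∈ B(H, K) and S ∈ B(K, H). If the product T S is generalized Drazin invertible in B(K), then S T is generalized Drazin invertible in B(H) and (S T)^d = S ((T S)^d)² T. -/
/-!
Jacobson's lemma: if `z ≠ 0` and `z - TS` has inverse `w`, then `z - ST` has inverse
`z⁻¹ (1 + S w T)`; so `ST` and `TS` have the same nonzero spectrum and the same spectral radius.
With `B = S A² T`, the products `(S X T)(S Y T) = S (X TS Y) T` reduce the algebraic identities for
`B` to those for `A`, and `ST - (ST)² B = S (1 - TS A) T` has the spectral radius of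
`(1 - TS A) TS = TS - (TS)² A`.
-/

set_option linter.unusedSectionVars false

open Filter Topology

variable {H K : Type*} [NormedAddCommGroup H] [InnerProductSpace ℂ H] [CompleteSpace H]
  [NormedAddCommGroup K] [InnerProductSpace ℂ K] [CompleteSpace K]

variable {𝕜 E F : Type*} [NormedField 𝕜] [NormedAddCommGroup E] [NormedSpace 𝕜 E]
  [NormedAddCommGroup F] [NormedSpace 𝕜 F]

namespace ContinuousLinearMap

theorem isUnit_algebraMap_sub_comp_comm (u : E →L[𝕜] F) (v : F →L[𝕜] E) {z : 𝕜} (hz : z ≠ 0)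
    (h : IsUnit (algebraMap 𝕜 (F →L[𝕜] F) z - u ∘L v)) :
    IsUnit (algebraMap 𝕜 (E →L[𝕜] E) z - v ∘L u) := by
  obtain ⟨w, hw_right, hw_left⟩ := isUnit_iff_exists.mp h
  simp only [Algebra.algebraMap_eq_smul_one] at hw_right hw_left ⊢
  have expand_right : (z • 1 - v ∘L u) * (1 + v ∘L w ∘L u) =
      z • 1 - v ∘L u + v ∘L ((z • 1 - u ∘L v) * w) ∘L u := by
    ext x; simp [sub_add_sub_comm]
  have expand_left : (1 + v ∘L w ∘L u) * (z • 1 - v ∘L u) =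
      z • 1 - v ∘L u + v ∘L (w * (z • 1 - u ∘L v)) ∘L u := by
    ext x; simp [sub_add_sub_comm]
  refine isUnit_iff_exists.mpr ⟨z⁻¹ • (1 + v ∘L w ∘L u), ?_, ?_⟩
  · rw [mul_smul_comm, expand_right, hw_right]
    ext x; simp [smul_sub, smul_smul, hz]
  · rw [smul_mul_assoc, expand_left, hw_left]
    ext x; simp [smul_sub, smul_smul, hz]

theorem spectrum_comp_comm_diff_subset (u : E →L[𝕜] F) (v : F →L[𝕜] E) :
    spectrum 𝕜 (v ∘L u) \ {0} ⊆ spectrum 𝕜 (u ∘L v) := by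
  rintro z ⟨hz_mem, hz_ne⟩ hz_res
  exact hz_mem (isUnit_algebraMap_sub_comp_comm u v hz_ne hz_res)

theorem spectralRadius_comp_comm_le (u : E →L[𝕜] F) (v : F →L[𝕜] E) :
    spectralRadius 𝕜 (v ∘L u) ≤ spectralRadius 𝕜 (u ∘L v) := by
  refine iSup₂_le fun z hz => ?_
  rcases eq_or_ne z 0 with rfl | hz_ne
  · simp
  · exact le_iSup₂ (f := fun k (_ : k ∈ spectrum 𝕜 (u ∘L v)) => (‖k‖₊ : ENNReal)) z
      (spectrum_comp_comm_diff_subset u v ⟨hz, hz_ne⟩)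

theorem spectralRadius_comp_comm (u : E →L[𝕜] F) (v : F →L[𝕜] E) :
    spectralRadius 𝕜 (v ∘L u) = spectralRadius 𝕜 (u ∘L v) :=
  (spectralRadius_comp_comm_le u v).antisymm (spectralRadius_comp_comm_le v u)

end ContinuousLinearMap

structure IsGenDrazinInverse (𝕜 : Type*) {A : Type*} [NormedField 𝕜] [Ring A] [Algebra 𝕜 A]
    (a b : A) : Prop where
  outer : b * a * b = b
  commute : Commute a b
  quasinilpotent : spectralRadius 𝕜 (a - a ^ 2 * b) = 0

namespace IsGenDrazinInverse

section Ring

variable {𝕜 A : Type*} [NormedField 𝕜] [Ring A] [Algebra 𝕜 A] {a b : A}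

theorem mul_self_mul (h : IsGenDrazinInverse 𝕜 a b) : b * b * a = b := by
  rw [mul_assoc, ← h.commute.eq, ← mul_assoc, h.outer]

theorem mul_mul_self (h : IsGenDrazinInverse 𝕜 a b) : a * (b * b) = b := by
  rw [← mul_assoc, h.commute.eq, h.outer]

end Ring

open ContinuousLinearMap

theorem comp_comm {T : E →L[𝕜] F} {S : F →L[𝕜] E} {A : F →L[𝕜] F}
    (h : IsGenDrazinInverse 𝕜 (T ∘L S) A) :
    IsGenDrazinInverse 𝕜 (S ∘L T) (S ∘L (A * A) ∘L T) := by
  set M := T ∘L S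
  have sandwich_mul (X Y : F →L[𝕜] F) :
      (S ∘L X ∘L T) * (S ∘L Y ∘L T) = S ∘L (X * M * Y) ∘L T := rfl
  have sandwich_one : S ∘L (1 : F →L[𝕜] F) ∘L T = S ∘L T := rfl
  rw [← sandwich_one]
  refine ⟨?_, ?_, ?_⟩
  · rw [sandwich_mul, sandwich_mul, mul_one, h.mul_self_mul, mul_assoc, h.mul_mul_self]
  · show _ * _ = _ * _
    rw [sandwich_mul, sandwich_mul, one_mul, mul_one, h.mul_self_mul, h.mul_mul_self]
  · rw [sq, sandwich_mul, sandwich_mul, one_mul, mul_one, mul_assoc,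
      h.mul_mul_self, ← comp_sub, ← sub_comp, spectralRadius_comp_comm]
    have swapped : ((1 - M * A) ∘L T) ∘L S = M - M ^ 2 * A := by
      change (1 - M * A) * M = _
      rw [sub_mul, one_mul, mul_assoc, ← h.commute.eq, ← mul_assoc, sq]
    rw [swapped, h.quasinilpotent]

end IsGenDrazinInverse

theorem stmt18 (T : H →L[ℂ] K) (S : K →L[ℂ] H) (A : K →L[ℂ] K)
    (hd1 : A * (T ∘L S) * A = A) (hd2 : (T ∘L S) * A = A * (T ∘L S))
    (hd3 : spectralRadius ℂ ((T ∘L S) - (T ∘L S) ^ 2 * A) = 0) :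
    (let B := S ∘L (A * A) ∘L T;
      B * (S ∘L T) * B = B ∧ (S ∘L T) * B = B * (S ∘L T) ∧
      spectralRadius ℂ ((S ∘L T) - (S ∘L T) ^ 2 * B) = 0) :=
  have h := (IsGenDrazinInverse.mk hd1 hd2 hd3).comp_comm
  ⟨h.outer, h.commute, h.quasinilpotent⟩
end
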